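/- Let d be a positive integer, let j ≥ 1 be an integer, and let λ : ℕ → ℝ (indexed from 1) be nondecreasing with λ_1 > 0 and λ_k → ∞. Suppose that (i) z ↦ R_2(z)/z^{2 + d/2} is nondecreasing on [λ_1, ∞), (ii) λ_j ≤ (1 + 4/d)·λ̄_j, (iii) for all z ≥ λ_1, R_1(z) ≥ (1 + d/4) · R_2(z)/z, and (iv) for all z ≥ λ_1, N(z) ≥ (1 + d/4) · R_1(z)/z. Then for every z ≥ (1 + 4/d)·λ̄_j, N(z) ≥ j · ( z / ((1 + 4/d)·λ̄_j) )^{d/2}. -/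

import Mathlib

open Real Filter

/-- Riesz mean of order `σ` of the sequence `λ_1, λ_2, …` (here `lam (k+1)` is `λ_{k+1}`):
`R_σ(z) := Σ_{k ≥ 1} (z - λ_k)_+ ^ σ`. -/
noncomputable def rieszMean (lam : ℕ → ℝ) (σ z : ℝ) : ℝ :=
  ∑' k : ℕ, (max (z - lam (k + 1)) 0) ^ σ

/-- The eigenvalue counting function `N(z) := #{k ≥ 1 : λ_k < z}`, as a real number. -/
noncomputable def countingFn (lam : ℕ → ℝ) (z : ℝ) : ℝ :=
  Nat.card {k : ℕ // 1 ≤ k ∧ lam k < z}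

/-- The average `λ̄_j := (1/j) Σ_{ℓ=1}^j λ_ℓ` of the first `j` terms. -/
noncomputable def eigAvg (lam : ℕ → ℝ) (j : ℕ) : ℝ :=
  (∑ ℓ ∈ Finset.Icc 1 j, lam ℓ) / j

/-!
Chaining (iv) and (iii) gives `N(z) ≥ (1 + d/4)² R₂(z) / z²`, and (i) transports `R₂` from
`M := (1 + 4/d) λ̄_j` up to `z ≥ M` gaining the factor `(z/M)^(2 + d/2)`. At `M` itself,
keeping only the first `j` terms of `R₂` and applying Jensen gives `R₂(M) ≥ j (M - λ̄_j)²`, and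
the choice of `M` makes `(1 + d/4)(M - λ̄_j) = M`, so the bound collapses to `j (z/M)^(d/2)`.
-/

lemma summable_rieszMean_terms {lam : ℕ → ℝ} (htend : Tendsto lam atTop atTop) {σ : ℝ}
    (hσ : σ ≠ 0) (z : ℝ) : Summable fun k : ℕ => (max (z - lam (k + 1)) 0) ^ σ := by
  obtain ⟨N, hN⟩ := (htend.eventually_ge_atTop z).exists_forall_of_atTop
  refine summable_of_ne_finset_zero (s := Finset.range N) fun k hk => ?_
  have hk : N ≤ k + 1 := by simp only [Finset.mem_range, not_lt] at hk; omega
  rw [max_eq_right (sub_nonpos.2 (hN _ hk)), zero_rpow hσ]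

lemma sum_le_rieszMean {lam : ℕ → ℝ} (htend : Tendsto lam atTop atTop) {σ : ℝ}
    (hσ : σ ≠ 0) (z : ℝ) (s : Finset ℕ) :
    ∑ k ∈ s, (max (z - lam (k + 1)) 0) ^ σ ≤ rieszMean lam σ z :=
  (summable_rieszMean_terms htend hσ z).sum_le_tsum s fun _ _ =>
    rpow_nonneg (le_max_right _ _) _

lemma natCast_mul_eigAvg (lam : ℕ → ℝ) (j : ℕ) :
    (j : ℝ) * eigAvg lam j = ∑ k ∈ Finset.range j, lam (k + 1) := by
  rw [eigAvg, Finset.range_eq_Ico, Finset.sum_Ico_add' lam, zero_add]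
  rcases Nat.eq_zero_or_pos j with rfl | hj
  · simp
  · exact mul_div_cancel₀ _ (by positivity)

lemma natCast_mul_sq_sub_eigAvg_le_rieszMean_two {lam : ℕ → ℝ}
    (htend : Tendsto lam atTop atTop) (j : ℕ) {z : ℝ} (hz : eigAvg lam j ≤ z) :
    (j : ℝ) * (z - eigAvg lam j) ^ 2 ≤ rieszMean lam 2 z := by
  set x : ℕ → ℝ := fun k => max (z - lam (k + 1)) 0
  have hsum : (j : ℝ) * (z - eigAvg lam j) ≤ ∑ k ∈ Finset.range j, x k := by
    calc (j : ℝ) * (z - eigAvg lam j) = ∑ k ∈ Finset.range j, (z - lam (k + 1)) := by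
          simp [Finset.sum_sub_distrib, mul_sub, natCast_mul_eigAvg]
      _ ≤ ∑ k ∈ Finset.range j, x k := Finset.sum_le_sum fun _ _ => le_max_left _ _
  have hjensen := pow_sum_div_card_le_sum_pow (s := Finset.range j) (f := x)
    (fun _ _ => le_max_right _ _) 1
  calc (j : ℝ) * (z - eigAvg lam j) ^ 2 = ((j : ℝ) * (z - eigAvg lam j)) ^ 2 / j := by
        rcases Nat.eq_zero_or_pos j with rfl | hj
        · simp
        · field_simp
    _ ≤ (∑ k ∈ Finset.range j, x k) ^ 2 / j := by gcongr
    _ ≤ ∑ k ∈ Finset.range j, x k ^ 2 := by simpa using hjensen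
    _ ≤ rieszMean lam 2 z := by
        simpa only [x, ← rpow_natCast, Nat.cast_ofNat] using
          sum_le_rieszMean htend two_ne_zero z (Finset.range j)

lemma lam_one_le_eigAvg {lam : ℕ → ℝ} (hmono : ∀ k : ℕ, 1 ≤ k → lam k ≤ lam (k + 1))
    {j : ℕ} (hj : 1 ≤ j) : lam 1 ≤ eigAvg lam j := by
  have hj' : (0 : ℝ) < j := by exact_mod_cast hj
  rw [← mul_le_mul_iff_of_pos_left hj', natCast_mul_eigAvg]
  simpa using Finset.sum_le_sum fun k (_ : k ∈ Finset.range j) =>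
    monotoneOn_nat_Ici_of_le_succ hmono (le_refl 1) (Nat.le_add_left 1 k) (Nat.le_add_left 1 k)

lemma mul_rpow_le_of_monotoneOn_div_rpow {f : ℝ → ℝ} {p : ℝ} {s : Set ℝ}
    (hf : MonotoneOn (fun z => f z / z ^ p) s) {a b : ℝ} (ha : a ∈ s) (hb : b ∈ s)
    (ha0 : 0 < a) (hab : a ≤ b) : f a * (b / a) ^ p ≤ f b := by
  have hb0 : 0 < b := ha0.trans_le hab
  have := hf ha hb hab
  rw [div_le_div_iff₀ (rpow_pos_of_pos ha0 p) (rpow_pos_of_pos hb0 p)] at this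
  rw [div_rpow hb0.le ha0.le, ← mul_div_assoc, div_le_iff₀ (rpow_pos_of_pos ha0 p)]
  exact this

lemma le_countingFn_of_rieszMean {lam : ℕ → ℝ} {a z : ℝ} (ha : 0 ≤ a) (hz : 0 < z)
    (h1 : rieszMean lam 1 z ≥ a * rieszMean lam 2 z / z)
    (h0 : countingFn lam z ≥ a * rieszMean lam 1 z / z) :
    a ^ 2 * rieszMean lam 2 z / z ^ 2 ≤ countingFn lam z :=
  calc a ^ 2 * rieszMean lam 2 z / z ^ 2 = a * (a * rieszMean lam 2 z / z) / z := by
        field_simp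
    _ ≤ a * rieszMean lam 1 z / z := by gcongr
    _ ≤ countingFn lam z := h0

theorem counting_lower_bound_avg_general (d : ℕ) (hd : 0 < d) (j : ℕ) (hj : 1 ≤ j)
    (lam : ℕ → ℝ)
    (hmono : ∀ k : ℕ, 1 ≤ k → lam k ≤ lam (k + 1))
    (hpos : 0 < lam 1)
    (htend : Tendsto lam atTop atTop)
    (hmonoR : MonotoneOn (fun z => rieszMean lam 2 z / z ^ (2 + (d : ℝ) / 2))
      (Set.Ici (lam 1)))
    (hdiff1 : ∀ z : ℝ, lam 1 ≤ z →
      rieszMean lam 1 z ≥ (1 + (d : ℝ) / 4) * rieszMean lam 2 z / z)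
    (hdiff0 : ∀ z : ℝ, lam 1 ≤ z →
      countingFn lam z ≥ (1 + (d : ℝ) / 4) * rieszMean lam 1 z / z) :
    ∀ z : ℝ, (1 + 4 / (d : ℝ)) * eigAvg lam j ≤ z →
      countingFn lam z ≥
        (j : ℝ) * (z / ((1 + 4 / (d : ℝ)) * eigAvg lam j)) ^ ((d : ℝ) / 2) := by
  intro z hz
  have hd' : (0 : ℝ) < d := by exact_mod_cast hd
  set μ := eigAvg lam j
  set M := (1 + 4 / (d : ℝ)) * μ
  set a := 1 + (d : ℝ) / 4
  have h1μ : lam 1 ≤ μ := lam_one_le_eigAvg hmono hj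
  have hμ : 0 < μ := hpos.trans_le h1μ
  have hμM : μ ≤ M := le_mul_of_one_le_left hμ.le (by simp; positivity)
  have h1M : lam 1 ≤ M := h1μ.trans hμM
  have hM : 0 < M := hpos.trans_le h1M
  have hz0 : 0 < z := hM.trans_le hz
  have h1z : lam 1 ≤ z := h1M.trans hz
  have hscale : a ^ 2 * (M - μ) ^ 2 / M ^ 2 = 1 := by
    simp only [a, M]
    field_simp
    ring
  calc (j : ℝ) * (z / M) ^ ((d : ℝ) / 2)
      = (j : ℝ) * (a ^ 2 * (M - μ) ^ 2 / M ^ 2) * (z / M) ^ ((d : ℝ) / 2) := by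
        rw [hscale, mul_one]
    _ = a ^ 2 * ((j : ℝ) * (M - μ) ^ 2 * (z / M) ^ (2 + (d : ℝ) / 2)) / z ^ 2 := by
        rw [rpow_add (div_pos hz0 hM), rpow_two, div_pow]
        field_simp
    _ ≤ a ^ 2 * (rieszMean lam 2 M * (z / M) ^ (2 + (d : ℝ) / 2)) / z ^ 2 := by
        gcongr
        exact natCast_mul_sq_sub_eigAvg_le_rieszMean_two htend j hμM
    _ ≤ a ^ 2 * rieszMean lam 2 z / z ^ 2 := by
        gcongr
        exact mul_rpow_le_of_monotoneOn_div_rpow hmonoR h1M h1z hM hz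
    _ ≤ countingFn lam z :=
        le_countingFn_of_rieszMean (by positivity) hz0 (hdiff1 z h1z) (hdiff0 z h1z)

/-- Inequality (2.28) of Corollary 7: for `z ≥ (1 + 4/d) λ̄_j`,
`N(z) ≥ j (z / ((1 + 4/d) λ̄_j))^(d/2)`. -/
theorem counting_lower_bound_avg (d : ℕ) (hd : 0 < d) (j : ℕ) (hj : 1 ≤ j)
    (lam : ℕ → ℝ)
    (hmono : ∀ k : ℕ, 1 ≤ k → lam k ≤ lam (k + 1))
    (hpos : 0 < lam 1)
    (htend : Tendsto lam atTop atTop)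
    (hmonoR : MonotoneOn (fun z => rieszMean lam 2 z / z ^ (2 + (d : ℝ) / 2))
      (Set.Ici (lam 1)))
    (hyang : lam j ≤ (1 + 4 / (d : ℝ)) * eigAvg lam j)
    (hdiff1 : ∀ z : ℝ, lam 1 ≤ z →
      rieszMean lam 1 z ≥ (1 + (d : ℝ) / 4) * rieszMean lam 2 z / z)
    (hdiff0 : ∀ z : ℝ, lam 1 ≤ z →
      countingFn lam z ≥ (1 + (d : ℝ) / 4) * rieszMean lam 1 z / z) :
    ∀ z : ℝ, (1 + 4 / (d : ℝ)) * eigAvg lam j ≤ z →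
      countingFn lam z ≥
        (j : ℝ) * (z / ((1 + 4 / (d : ℝ)) * eigAvg lam j)) ^ ((d : ℝ) / 2) :=
  counting_lower_bound_avg_general d hd j hj lam hmono hpos htend hmonoR hdiff1 hdiff0
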